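/- arXiv:0803.0788 — 2 statements merged into one kernel-verified Lean document; each statement's English description precedes it below -/
import Mathlib

section
/- (Carleson Embedding Theorem, discrete form) There is an absolute constant C > 0 such that for every finitely supported real sequence b = {b_I : I ∈ 𝒟} and every f ∈ L²(ℝ), Σ_{I∈𝒟} b_I² ⟨f, h¹_I⟩² ≤ C · ‖{b_I}‖_Carl² · ‖f‖_2². -/
open MeasureTheory ProbabilityTheory Real Filter
open scoped ENNReal

attribute [local instance] Classical.propDecidable

noncomputable section

namespace RandomParaproducts

/-- Dyadic intervals: `(n, k)` represents `[k·2ⁿ, (k+1)·2ⁿ)`. -/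
abbrev D : Type := ℤ × ℤ

/-- The length `2ⁿ` of the dyadic interval `(n, k)`. -/
def len (I : D) : ℝ := (2 : ℝ) ^ I.1

/-- The dyadic interval `[k·2ⁿ, (k+1)·2ⁿ)` as a subset of `ℝ`. -/
def ival (I : D) : Set ℝ := Set.Ico ((I.2 : ℝ) * (2 : ℝ) ^ I.1) (((I.2 : ℝ) + 1) * (2 : ℝ) ^ I.1)

/-- The left half of a dyadic interval. -/
def lc (I : D) : D := (I.1 - 1, 2 * I.2)

/-- The right half of a dyadic interval. -/
def rc (I : D) : D := (I.1 - 1, 2 * I.2 + 1)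

/-- The `L²`-normalized Haar function `h_I = h⁰_I`. -/
def haar (I : D) : ℝ → ℝ := fun x =>
  (Real.sqrt (len I))⁻¹ *
    ((ival (rc I)).indicator (fun _ => (1 : ℝ)) x - (ival (lc I)).indicator (fun _ => (1 : ℝ)) x)

/-- The function `h¹_I = |h_I| = |I|^{-1/2} 1_I`. -/
def haar1 (I : D) : ℝ → ℝ := fun x =>
  (Real.sqrt (len I))⁻¹ * (ival I).indicator (fun _ => (1 : ℝ)) x

/-- `h^ε_I`, where `false` codes the exponent `0` and `true` codes the exponent `1`. -/
def hfun : Bool → D → ℝ → ℝ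
  | false => haar
  | true => haar1

/-- The inner product `⟨f, g⟩ = ∫ f g` on `L²(ℝ)`. -/
def ip (f g : ℝ → ℝ) : ℝ := ∫ x, f x * g x

/-- The paraproduct `P^{ε,δ}_b f = ∑_I b_I ⟨f, h^δ_I⟩ h^ε_I` with finitely supported
numerical symbol `b`. -/
def P (e d : Bool) (b : D →₀ ℝ) (f : ℝ → ℝ) : ℝ → ℝ := fun x =>
  ∑ I ∈ b.support, b I * ip f (hfun d I) * hfun e I x

/-- The signed paraproduct `P^{σ,ε,δ}_b f = ∑_I σ_I b_I ⟨f, h^δ_I⟩ h^ε_I`. -/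
def Psig (σ : D → ℝ) (e d : Bool) (b : D →₀ ℝ) (f : ℝ → ℝ) : ℝ → ℝ := fun x =>
  ∑ I ∈ b.support, σ I * (b I * ip f (hfun d I) * hfun e I x)

/-- The square of the `L²(ℝ)` norm, `‖g‖₂² = ∫ g²`. -/
def l2normSq (g : ℝ → ℝ) : ℝ := ∫ x, (g x) ^ 2

/-- The Carleson norm of a sequence `a` whose nonzero entries lie in the finite set `s`:
`sup_J (|J|⁻¹ ∑_{I ⊆ J} a_I² |I|)^{1/2}`. -/
def carlOn (s : Finset D) (a : D → ℝ) : ℝ :=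
  ⨆ J : D, Real.sqrt ((len J)⁻¹ *
    ∑ I ∈ s.filter (fun I => ival I ⊆ ival J), (a I) ^ 2 * len I)

/-- `μ` is the law of independent uniformly distributed random signs `{σ_I : I ∈ 𝒟}`. -/
def IsSignMeasure (μ : Measure (D → ℝ)) : Prop :=
  IsProbabilityMeasure μ ∧
    iIndepFun (m := fun _ : D => (inferInstance : MeasurableSpace ℝ)) (fun I σ => σ I) μ ∧
    ∀ I : D, μ.map (fun σ => σ I) =
      (2⁻¹ : ℝ≥0∞) • (Measure.dirac (1 : ℝ) + Measure.dirac (-1 : ℝ))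

/-- `f` is a unit vector of `L²(ℝ)`. -/
def UnitL2 (f : ℝ → ℝ) : Prop := MemLp f 2 volume ∧ eLpNorm f 2 volume = 1

/-- The operator norm on `L²(ℝ)` of a map defined on functions. -/
def opNorm (T : (ℝ → ℝ) → ℝ → ℝ) : ℝ :=
  ⨆ f : {f : ℝ → ℝ // UnitL2 f}, Real.sqrt (l2normSq (T f.1))

/-- The averaged operator norm `sup_{‖f‖₂ = 1} (𝔼 ‖T_σ f‖₂²)^{1/2}`. -/
def avgOpNorm (μ : Measure (D → ℝ)) (T : (D → ℝ) → (ℝ → ℝ) → ℝ → ℝ) : ℝ :=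
  ⨆ f : {f : ℝ → ℝ // UnitL2 f}, Real.sqrt (∫ σ, l2normSq (T σ f.1) ∂μ)

/-- `b` is the finite linear combination of Haar functions with coefficients `c`. -/
def FinHaar (b : ℝ → ℝ) (c : D →₀ ℝ) : Prop :=
  b = fun x => ∑ I ∈ c.support, c I * haar I x

/-- The paraproduct `P^{ε,γ}_{b,α} f = ∑_{I} (⟨b, h^α_I⟩/|I|^{1/2}) ⟨f, h^γ_I⟩ h^ε_I` with
function symbol `b`, the sum extended over a finite set `s` containing all the
nonvanishing terms. -/
def Pb (s : Finset D) (e g a : Bool) (b : ℝ → ℝ) (f : ℝ → ℝ) : ℝ → ℝ := fun x =>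
  ∑ I ∈ s, (ip b (hfun a I) / Real.sqrt (len I)) * ip f (hfun g I) * hfun e I x

lemma measurableSet_ival (I : D) : MeasurableSet (ival I) := measurableSet_Ico

lemma volume_ival_ne_top (I : D) : volume (ival I) ≠ ⊤ := by
  simp only [ival, Real.volume_Ico]; exact ENNReal.ofReal_ne_top

lemma memℒp_haar (I : D) : MemLp (haar I) 2 volume := by
  have h1 : MemLp ((ival (rc I)).indicator (fun _ => (1 : ℝ))) 2 volume :=
    memLp_indicator_const 2 (measurableSet_ival _) 1 (Or.inr (volume_ival_ne_top _))
  have h2 : MemLp ((ival (lc I)).indicator (fun _ => (1 : ℝ))) 2 volume :=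
    memLp_indicator_const 2 (measurableSet_ival _) 1 (Or.inr (volume_ival_ne_top _))
  exact ((h1.sub h2).const_mul ((Real.sqrt (len I))⁻¹))

/-- The Haar function `h_I` as an element of `L²(ℝ)`. -/
def haarLp (I : D) : Lp ℝ 2 (volume : Measure ℝ) := (memℒp_haar I).toLp (haar I)

/-- The random Haar multiplier `T_σ f = ∑_{I ∈ 𝒟} σ_I ⟨f, h_I⟩ h_I`, as an element of
`L²(ℝ)`; the (infinite) sum converges unconditionally in `L²`. -/
def Tfull (σ : D → ℝ) (g : ℝ → ℝ) : Lp ℝ 2 (volume : Measure ℝ) :=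
  ∑' I : D, (σ I * ip g (haar I)) • haarLp I

/-- The composition `M_b T_σ M_β` applied to `f`, as a function. -/
def MbTM (σ : D → ℝ) (b β f : ℝ → ℝ) : ℝ → ℝ := fun x =>
  b x * (Tfull σ fun y => β y * f y) x

/-!
Since `⟨f, h¹_I⟩² ≤ |I| (⨍_I |f|)²`, it suffices to bound `∑ b_I² |I| (⨍_I |f|)²`, which we
split according to the dyadic level `2ᶜ ≤ ⨍_I |f| < 2ᶜ⁺¹`. At level `λ = 2ᶜ`, every interval
with `⨍_I |f| ≥ λ` lies in its maximal dyadic ancestor with the same property; these ancestors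
are pairwise disjoint, so by the Carleson condition the level carries weight at most
`‖b‖²_Carl ∑ |J|`, and `λ |J| / 2 ≤ ∫_J |f| 1_{|f| > λ/2}` for each of them. Summing over the
levels, `∑_c 2ᶜ ∫ |f| 1_{|f| > 2ᶜ⁻¹} ≤ 4 ‖f‖₂²`, which gives the constant `32`.
-/

/-- `I.2 / 2` is `⌊k / 2⌋` also for negative `k`: `ℤ` division rounds down for positive
divisors. -/
def parent (I : D) : D := (I.1 + 1, I.2 / 2)

lemma len_pos (I : D) : 0 < len I := zpow_pos two_pos _

lemma volume_ival (I : D) : volume (ival I) = ENNReal.ofReal (len I) := by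
  rw [ival, Real.volume_Ico, len]
  ring_nf

lemma measureReal_ival (I : D) : volume.real (ival I) = len I := by
  rw [measureReal_def, volume_ival, ENNReal.toReal_ofReal (len_pos I).le]

lemma ival_nonempty (I : D) : (ival I).Nonempty :=
  Set.nonempty_Ico.2 (by have := len_pos I; rw [len] at this; nlinarith)

lemma ival_subset_parent (I : D) : ival I ⊆ ival (parent I) := by
  have hlo : ((2 * (I.2 / 2) : ℤ) : ℝ) ≤ I.2 := by exact_mod_cast (by omega : 2 * (I.2 / 2) ≤ I.2)
  have hhi : (I.2 : ℝ) + 1 ≤ ((2 * (I.2 / 2) + 2 : ℤ) : ℝ) := by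
    exact_mod_cast (by omega : I.2 + 1 ≤ 2 * (I.2 / 2) + 2)
  have h := len_pos I
  rw [len] at h
  simp only [ival, parent, zpow_add_one₀ (two_ne_zero (α := ℝ))]
  push_cast at hlo hhi
  apply Set.Ico_subset_Ico <;> nlinarith

lemma iterate_parent_fst (n : ℕ) (I : D) : (parent^[n] I).1 = I.1 + n := by
  induction n generalizing I with
  | zero => simp
  | succ m ih => rw [Function.iterate_succ_apply, ih, parent]; push_cast; ring

lemma ival_subset_iterate_parent (n : ℕ) (I : D) : ival I ⊆ ival (parent^[n] I) := by
  induction n generalizing I with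
  | zero => simp
  | succ m ih => exact (ival_subset_parent I).trans (ih (parent I))

lemma len_iterate_parent (n : ℕ) (I : D) : len (parent^[n] I) = 2 ^ n * len I := by
  rw [len, len, iterate_parent_fst, zpow_add₀ two_ne_zero, zpow_natCast, mul_comm]

lemma len_le_len_of_subset {I J : D} (h : ival I ⊆ ival J) : len I ≤ len J := by
  have := measure_mono (μ := volume) h
  rwa [volume_ival, volume_ival, ENNReal.ofReal_le_ofReal_iff (len_pos J).le] at this

lemma eq_of_fst_eq_of_not_disjoint {I J : D} (h : I.1 = J.1)
    (hIJ : ¬Disjoint (ival I) (ival J)) : I = J := by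
  obtain ⟨x, ⟨hxI₁, hxI₂⟩, ⟨hxJ₁, hxJ₂⟩⟩ := Set.not_disjoint_iff.1 hIJ
  rw [← h] at hxJ₁ hxJ₂
  have hl := zpow_pos (two_pos (α := ℝ)) I.1
  have h₁ : (I.2 : ℝ) < J.2 + 1 := lt_of_mul_lt_mul_right (hxI₁.trans_lt hxJ₂) hl.le
  have h₂ : (J.2 : ℝ) < I.2 + 1 := lt_of_mul_lt_mul_right (hxJ₁.trans_lt hxI₂) hl.le
  norm_cast at h₁ h₂
  exact Prod.ext h (by omega)

lemma iterate_parent_eq_of_subset {I J : D} (h : ival I ⊆ ival J) :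
    parent^[(J.1 - I.1).toNat] I = J := by
  have hle : I.1 ≤ J.1 := (zpow_le_zpow_iff_right₀ one_lt_two).1 (len_le_len_of_subset h)
  refine eq_of_fst_eq_of_not_disjoint (by rw [iterate_parent_fst]; omega) ?_
  obtain ⟨x, hx⟩ := ival_nonempty I
  exact Set.not_disjoint_iff.2 ⟨x, ival_subset_iterate_parent _ I hx, h hx⟩

lemma ival_subset_of_fst_le_of_not_disjoint {I J : D} (h : I.1 ≤ J.1)
    (hIJ : ¬Disjoint (ival I) (ival J)) : ival I ⊆ ival J := by
  set n := (J.1 - I.1).toNat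
  have hfst : (parent^[n] I).1 = J.1 := by rw [iterate_parent_fst]; omega
  have hne : ¬Disjoint (ival (parent^[n] I)) (ival J) :=
    fun hd => hIJ (hd.mono_left (ival_subset_iterate_parent n I))
  rw [← eq_of_fst_eq_of_not_disjoint hfst hne]
  exact ival_subset_iterate_parent n I

section MaximalAncestor

variable {P : D → Prop}

lemma exists_maximal_iterate_parent {B : ℝ} (hB : ∀ J, P J → len J ≤ B) {I : D} (hI : P I) :
    ∃ n, P (parent^[n] I) ∧ ∀ m, P (parent^[m] I) → m ≤ n := by
  obtain ⟨N, hN⟩ := pow_unbounded_of_one_lt (B / len I) one_lt_two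
  have hbound : ∀ m, P (parent^[m] I) → m ≤ N := by
    intro m hm
    by_contra! hNm
    have := hB _ hm
    rw [len_iterate_parent, ← le_div_iff₀ (len_pos I)] at this
    exact (hN.trans_le ((pow_le_pow_right₀ one_le_two hNm.le).trans this)).false
  exact ⟨Nat.findGreatest (fun m => P (parent^[m] I)) N,
    Nat.findGreatest_spec (P := fun m => P (parent^[m] I)) (Nat.zero_le N) hI,
    fun m hm => Nat.le_findGreatest (hbound m hm) hm⟩

lemma iterate_parent_eq_of_maximal {I J : D} {n : ℕ} (hmax : ∀ m, P (parent^[m] I) → m ≤ n)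
    (hJ : P J) (hsub : ival (parent^[n] I) ⊆ ival J) : parent^[n] I = J := by
  have hk := iterate_parent_eq_of_subset hsub
  rw [← Function.iterate_add_apply] at hk
  have := hmax _ (hk ▸ hJ)
  rw [← hk, show (J.1 - (parent^[n] I).1).toNat = 0 by omega, zero_add]

lemma iterate_parent_eq_or_disjoint_of_maximal {I I' : D} {n n' : ℕ}
    (hn : P (parent^[n] I)) (hmax : ∀ m, P (parent^[m] I) → m ≤ n)
    (hn' : P (parent^[n'] I')) (hmax' : ∀ m, P (parent^[m] I') → m ≤ n') :
    parent^[n] I = parent^[n'] I' ∨ Disjoint (ival (parent^[n] I)) (ival (parent^[n'] I')) := by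
  by_contra! h
  obtain ⟨hne, hnd⟩ := h
  rcases le_total (parent^[n] I).1 (parent^[n'] I').1 with hle | hle
  · exact hne (iterate_parent_eq_of_maximal hmax hn'
      (ival_subset_of_fst_le_of_not_disjoint hle hnd))
  · exact hne (iterate_parent_eq_of_maximal hmax' hn
      (ival_subset_of_fst_le_of_not_disjoint hle (by rwa [disjoint_comm]))).symm

end MaximalAncestor

section Carleson

variable (s : Finset D) (a : D → ℝ)

lemma sum_sq_mul_len_le_carlOn_sq_mul_len (J : D) :
    ∑ I ∈ s.filter (fun I => ival I ⊆ ival J), a I ^ 2 * len I ≤ carlOn s a ^ 2 * len J := by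
  have hsum_nonneg : ∀ K : D, 0 ≤ (len K)⁻¹ *
      ∑ I ∈ s.filter (fun I => ival I ⊆ ival K), a I ^ 2 * len I := fun K =>
    mul_nonneg (inv_nonneg.2 (len_pos K).le)
      (Finset.sum_nonneg fun I _ => mul_nonneg (sq_nonneg _) (len_pos I).le)
  -- `carlOn` is a real `⨆` (junk `0` if unbounded); every normalized sum is `≤ ∑_{I ∈ s} a_I²`
  have hbdd : BddAbove (Set.range fun K : D => Real.sqrt ((len K)⁻¹ *
      ∑ I ∈ s.filter (fun I => ival I ⊆ ival K), a I ^ 2 * len I)) := by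
    refine ⟨Real.sqrt (∑ I ∈ s, a I ^ 2), ?_⟩
    rintro _ ⟨K, rfl⟩
    refine Real.sqrt_le_sqrt ((inv_mul_le_iff₀ (len_pos K)).2 ?_)
    calc ∑ I ∈ s.filter (fun I => ival I ⊆ ival K), a I ^ 2 * len I
        ≤ ∑ I ∈ s.filter (fun I => ival I ⊆ ival K), a I ^ 2 * len K :=
          Finset.sum_le_sum fun I hI => mul_le_mul_of_nonneg_left
            (len_le_len_of_subset (Finset.mem_filter.1 hI).2) (sq_nonneg _)
      _ ≤ ∑ I ∈ s, a I ^ 2 * len K :=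
          Finset.sum_le_sum_of_subset_of_nonneg (Finset.filter_subset _ _)
            fun I _ _ => mul_nonneg (sq_nonneg _) (len_pos K).le
      _ = len K * ∑ I ∈ s, a I ^ 2 := by rw [Finset.mul_sum]; simp only [mul_comm]
  have h := pow_le_pow_left₀ (Real.sqrt_nonneg _) (le_ciSup hbdd J) 2
  rw [Real.sq_sqrt (hsum_nonneg J), inv_mul_le_iff₀ (len_pos J)] at h
  rwa [carlOn, mul_comm]

variable {s} in
lemma sum_sq_mul_len_le_carlOn_sq_mul_sum_len {t : Finset D} (hts : t ⊆ s) (φ : D → D)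
    (hφ : ∀ I ∈ t, ival I ⊆ ival (φ I)) :
    ∑ I ∈ t, a I ^ 2 * len I ≤ carlOn s a ^ 2 * ∑ J ∈ t.image φ, len J := by
  rw [← Finset.sum_fiberwise_of_maps_to (fun I hI => Finset.mem_image_of_mem φ hI), Finset.mul_sum]
  refine Finset.sum_le_sum fun J _ => le_trans ?_ (sum_sq_mul_len_le_carlOn_sq_mul_len s a J)
  refine Finset.sum_le_sum_of_subset_of_nonneg ?_ fun I _ _ =>
    mul_nonneg (sq_nonneg _) (len_pos I).le
  intro I hI
  obtain ⟨hIt, rfl⟩ := Finset.mem_filter.1 hI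
  exact Finset.mem_filter.2 ⟨hts hIt, hφ I hIt⟩

end Carleson

lemma setAverage_ival (f : ℝ → ℝ) (I : D) :
    ⨍ x in ival I, f x = (len I)⁻¹ * ∫ x in ival I, f x := by
  rw [setAverage_eq, measureReal_ival, smul_eq_mul]

lemma ip_haar1 (f : ℝ → ℝ) (I : D) :
    ip f (haar1 I) = (Real.sqrt (len I))⁻¹ * ∫ x in ival I, f x := by
  rw [ip, ← integral_const_mul, ← integral_indicator (measurableSet_ival I)]
  congr 1 with x
  by_cases hx : x ∈ ival I <;> simp [haar1, hx, mul_comm]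

lemma sq_ip_haar1_le (f : ℝ → ℝ) (I : D) :
    ip f (haar1 I) ^ 2 ≤ len I * (⨍ x in ival I, |f x|) ^ 2 := by
  have habs : |∫ x in ival I, f x| ≤ ∫ x in ival I, |f x| := abs_integral_le_integral_abs
  have hlen := len_pos I
  calc ip f (haar1 I) ^ 2 = (len I)⁻¹ * |∫ x in ival I, f x| ^ 2 := by
        rw [ip_haar1, mul_pow, inv_pow, Real.sq_sqrt hlen.le, sq_abs]
    _ ≤ (len I)⁻¹ * (∫ x in ival I, |f x|) ^ 2 := by gcongr
    _ = len I * (⨍ x in ival I, |f x|) ^ 2 := by rw [setAverage_ival]; field_simp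

def largePart (f : ℝ → ℝ) (l : ℝ) : ℝ → ℝ := {y | l < 2 * |f y|}.indicator fun y => |f y|

lemma largePart_apply (f : ℝ → ℝ) (l x : ℝ) :
    largePart f l x = if l < 2 * |f x| then |f x| else 0 := by
  simp [largePart, Set.indicator_apply]

lemma largePart_nonneg (f : ℝ → ℝ) (l x : ℝ) : 0 ≤ largePart f l x := by
  rw [largePart_apply]; split_ifs <;> positivity

lemma abs_le_largePart_add (f : ℝ → ℝ) {l : ℝ} (hl : 0 ≤ l) (x : ℝ) :
    |f x| ≤ largePart f l x + l / 2 := by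
  rw [largePart_apply]; split_ifs <;> linarith

lemma integrable_largePart {f : ℝ → ℝ} (hm : Measurable f) (hf : MemLp f 2 volume) {l : ℝ}
    (hl : 0 < l) :
    Integrable (largePart f l) := by
  have hsq : Integrable (fun x => f x ^ 2) := hf.integrable_sq
  refine (hsq.const_mul (2 / l)).mono'
    (hm.abs.indicator (measurableSet_lt measurable_const (hm.abs.const_mul 2))).aestronglyMeasurable
    (Filter.Eventually.of_forall fun x => ?_)
  rw [Real.norm_eq_abs, abs_of_nonneg (largePart_nonneg f l x), largePart_apply]
  split_ifs with hx
  · rw [div_mul_eq_mul_div, le_div_iff₀ hl, ← sq_abs]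
    nlinarith [abs_nonneg (f x)]
  · positivity

lemma mul_len_le_setIntegral_largePart {f : ℝ → ℝ} (hm : Measurable f) (hf : MemLp f 2 volume)
    {l : ℝ} (hl : 0 < l) {J : D} (hJ : l ≤ ⨍ x in ival J, |f x|) :
    l / 2 * len J ≤ ∫ x in ival J, largePart f l x := by
  have hlen := len_pos J
  have hconst : IntegrableOn (fun _ => l / 2) (ival J) :=
    integrableOn_const (by rw [volume_ival]; exact ENNReal.ofReal_ne_top)
  have hint : IntegrableOn (fun x => largePart f l x + l / 2) (ival J) :=
    (integrable_largePart hm hf hl).integrableOn.add hconst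
  have hmono : ∫ x in ival J, |f x| ≤ ∫ x in ival J, (largePart f l x + l / 2) :=
    integral_mono_of_nonneg (Filter.Eventually.of_forall fun x => abs_nonneg _) hint
      (Filter.Eventually.of_forall fun x => abs_le_largePart_add f hl.le x)
  rw [integral_add (integrable_largePart hm hf hl).integrableOn hconst, setIntegral_const,
    measureReal_ival, smul_eq_mul] at hmono
  rw [setAverage_ival, inv_mul_eq_div, le_div_iff₀ hlen] at hJ
  linarith

section WeakType

open Function

variable {f : ℝ → ℝ} (hm : Measurable f) (hf : MemLp f 2 volume) {l : ℝ} (hl : 0 < l)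
include hm hf hl

lemma mul_sum_len_le_integral_largePart {T : Finset D}
    (hT : (T : Set D).Pairwise (Disjoint on ival)) (hTl : ∀ J ∈ T, l ≤ ⨍ x in ival J, |f x|) :
    l / 2 * ∑ J ∈ T, len J ≤ ∫ x, largePart f l x := by
  have hint := integrable_largePart hm hf hl
  calc l / 2 * ∑ J ∈ T, len J ≤ ∑ J ∈ T, ∫ x in ival J, largePart f l x := by
        rw [Finset.mul_sum]
        exact Finset.sum_le_sum fun J hJ => mul_len_le_setIntegral_largePart hm hf hl (hTl J hJ)
    _ = ∫ x in ⋃ J ∈ T, ival J, largePart f l x :=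
        (integral_biUnion_finset T (fun J _ => measurableSet_ival J) hT
          fun J _ => hint.integrableOn).symm
    _ ≤ ∫ x, largePart f l x :=
        setIntegral_le_integral hint (Filter.Eventually.of_forall (largePart_nonneg f l))

lemma sum_sq_mul_len_le_of_le_setAverage (s : Finset D) (a : D → ℝ) :
    ∑ I ∈ s.filter (fun I => l ≤ ⨍ x in ival I, |f x|), a I ^ 2 * len I
      ≤ carlOn s a ^ 2 * (2 / l * ∫ x, largePart f l x) := by
  set P : D → Prop := fun J => l ≤ ⨍ x in ival J, |f x|
  have hB : ∀ J, P J → len J ≤ 2 / l * ∫ x, largePart f l x := fun J hJ => by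
    rw [div_mul_eq_mul_div, le_div_iff₀ hl]
    linarith [mul_len_le_setIntegral_largePart hm hf hl hJ, setIntegral_le_integral
      (s := ival J) (integrable_largePart hm hf hl)
      (Filter.Eventually.of_forall (largePart_nonneg f l))]
  choose! n hn hmax using fun I (hI : I ∈ s.filter P) =>
    exists_maximal_iterate_parent hB (Finset.mem_filter.1 hI).2
  have hdisj : ((s.filter P).image fun I => parent^[n I] I : Set D).Pairwise
      (Disjoint on ival) := by
    simp only [Finset.coe_image, Set.Pairwise, Set.mem_image, Finset.mem_coe]
    rintro _ ⟨I, hI, rfl⟩ _ ⟨I', hI', rfl⟩ hne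
    exact (iterate_parent_eq_or_disjoint_of_maximal (hn I hI) (hmax I hI) (hn I' hI')
      (hmax I' hI')).resolve_left hne
  calc _ ≤ carlOn s a ^ 2 * ∑ J ∈ (s.filter P).image fun I => parent^[n I] I, len J :=
        sum_sq_mul_len_le_carlOn_sq_mul_sum_len a (Finset.filter_subset _ _) _
          fun I _ => ival_subset_iterate_parent _ I
    _ ≤ carlOn s a ^ 2 * (2 / l * ∫ x, largePart f l x) := by
        gcongr
        have hTl : ∀ J ∈ (s.filter P).image (fun I => parent^[n I] I), P J := by
          simp only [Finset.mem_image]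
          rintro _ ⟨I, hI, rfl⟩
          exact hn I hI
        rw [div_mul_eq_mul_div, le_div_iff₀ hl]
        linarith [mul_sum_len_le_integral_largePart hm hf hl hdisj hTl]

end WeakType

lemma sum_zpow_two_lt {K : Finset ℤ} {M : ℤ} (h : ∀ c ∈ K, c < M) :
    ∑ c ∈ K, (2 : ℝ) ^ c < 2 ^ M := by
  induction K using Finset.induction_on_max generalizing M with
  | empty => simpa using zpow_pos two_pos M
  | insert a K hlt ih =>
    have haM := h a (Finset.mem_insert_self a K)
    rw [Finset.sum_insert fun ha => (hlt a ha).false]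
    calc (2 : ℝ) ^ a + ∑ c ∈ K, 2 ^ c < 2 ^ a + 2 ^ a := by gcongr; exact ih hlt
      _ = 2 ^ (a + 1) := by rw [zpow_add_one₀ two_ne_zero]; ring
      _ ≤ 2 ^ M := zpow_le_zpow_right₀ one_le_two haM

lemma sum_zpow_two_le_of_lt {K : Finset ℤ} {B : ℝ} (hB : 0 ≤ B) (h : ∀ c ∈ K, (2 : ℝ) ^ c < B) :
    ∑ c ∈ K, (2 : ℝ) ^ c ≤ 2 * B := by
  rcases K.eq_empty_or_nonempty with rfl | hK
  · simpa using hB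
  have hM := h _ (K.max'_mem hK)
  calc ∑ c ∈ K, (2 : ℝ) ^ c ≤ 2 ^ (K.max' hK + 1) :=
        (sum_zpow_two_lt fun c hc => Int.lt_add_one_of_le (K.le_max' c hc)).le
    _ ≤ 2 * B := by rw [zpow_add_one₀ two_ne_zero]; linarith

lemma sum_zpow_mul_largePart_le (f : ℝ → ℝ) (K : Finset ℤ) (x : ℝ) :
    ∑ c ∈ K, (2 : ℝ) ^ c * largePart f (2 ^ c) x ≤ 4 * f x ^ 2 := by
  simp only [largePart_apply, mul_ite, mul_zero]
  rw [← Finset.sum_filter, ← Finset.sum_mul, ← sq_abs]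
  calc _ ≤ 2 * (2 * |f x|) * |f x| := by
        gcongr
        exact sum_zpow_two_le_of_lt (by positivity) fun c hc => (Finset.mem_filter.1 hc).2
    _ = 4 * |f x| ^ 2 := by ring

lemma sum_zpow_mul_integral_largePart_le {f : ℝ → ℝ} (hm : Measurable f) (hf : MemLp f 2 volume)
    (K : Finset ℤ) :
    ∑ c ∈ K, (2 : ℝ) ^ c * ∫ x, largePart f (2 ^ c) x ≤ 4 * ∫ x, f x ^ 2 := by
  have hint : ∀ c : ℤ, Integrable fun x => (2 : ℝ) ^ c * largePart f (2 ^ c) x := fun c =>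
    (integrable_largePart hm hf (zpow_pos two_pos c)).const_mul _
  simp_rw [← integral_const_mul]
  rw [← integral_finsetSum K fun c _ => hint c]
  exact integral_mono (integrable_finsetSum K fun c _ => hint c) (hf.integrable_sq.const_mul 4)
    (sum_zpow_mul_largePart_le f K)

lemma sum_mul_sq_le_sum_levels {ι : Type*} (S : Finset ι) {w x : ι → ℝ} (hw : ∀ i, 0 ≤ w i)
    (hx : ∀ i, 0 ≤ x i) :
    ∑ i ∈ S, w i * x i ^ 2 ≤ ∑ c ∈ S.image (fun i => Int.log 2 (x i)),
      4 * ((2 : ℝ) ^ c) ^ 2 * ∑ i ∈ S.filter (fun i => (2 : ℝ) ^ c ≤ x i), w i := by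
  rw [← Finset.sum_fiberwise_of_maps_to fun i hi =>
    Finset.mem_image_of_mem (fun i => Int.log 2 (x i)) hi]
  refine Finset.sum_le_sum fun c _ => ?_
  have hterm : ∀ i, Int.log 2 (x i) = c →
      w i * x i ^ 2 ≤ if (2 : ℝ) ^ c ≤ x i then 4 * ((2 : ℝ) ^ c) ^ 2 * w i else 0 := by
    intro i rfl
    rcases (hx i).eq_or_lt with h0 | hpos
    · rw [← h0]; split_ifs <;> simp [hw i]
    have hlo : (2 : ℝ) ^ Int.log 2 (x i) ≤ x i := mod_cast Int.zpow_log_le_self one_lt_two hpos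
    have hhi : x i < 2 * (2 : ℝ) ^ Int.log 2 (x i) := by
      have := Int.lt_zpow_succ_log_self one_lt_two (x i)
      rwa [Nat.cast_ofNat, zpow_add_one₀ two_ne_zero, mul_comm] at this
    rw [if_pos hlo, mul_comm _ (w i)]
    exact mul_le_mul_of_nonneg_left (by nlinarith) (hw i)
  calc ∑ i ∈ S.filter (fun i => Int.log 2 (x i) = c), w i * x i ^ 2
      ≤ ∑ i ∈ S.filter (fun i => Int.log 2 (x i) = c),
          if (2 : ℝ) ^ c ≤ x i then 4 * ((2 : ℝ) ^ c) ^ 2 * w i else 0 :=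
        Finset.sum_le_sum fun i hi => hterm i (Finset.mem_filter.1 hi).2
    _ ≤ ∑ i ∈ S, if (2 : ℝ) ^ c ≤ x i then 4 * ((2 : ℝ) ^ c) ^ 2 * w i else 0 :=
        Finset.sum_le_sum_of_subset_of_nonneg (Finset.filter_subset _ _) fun i _ _ => by
          split_ifs <;> positivity [hw i]
    _ = 4 * ((2 : ℝ) ^ c) ^ 2 * ∑ i ∈ S.filter (fun i => (2 : ℝ) ^ c ≤ x i), w i := by
        rw [← Finset.sum_filter, Finset.mul_sum]

lemma carleson_embedding_of_measurable (b : D →₀ ℝ) {f : ℝ → ℝ} (hm : Measurable f)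
    (hf : MemLp f 2 volume) :
    ∑ I ∈ b.support, b I ^ 2 * ip f (haar1 I) ^ 2 ≤
      32 * carlOn b.support (fun I => b I) ^ 2 * l2normSq f := by
  set S := b.support
  set carl := carlOn S fun I => b I
  set avg : D → ℝ := fun I => ⨍ x in ival I, |f x|
  have havg : ∀ I, 0 ≤ avg I := fun I => by
    simp only [avg, setAverage_ival]
    exact mul_nonneg (inv_nonneg.2 (len_pos I).le) (integral_nonneg fun x => abs_nonneg _)
  calc ∑ I ∈ S, b I ^ 2 * ip f (haar1 I) ^ 2 ≤ ∑ I ∈ S, b I ^ 2 * len I * avg I ^ 2 :=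
        Finset.sum_le_sum fun I _ => by
          rw [mul_assoc]; exact mul_le_mul_of_nonneg_left (sq_ip_haar1_le f I) (sq_nonneg _)
    _ ≤ ∑ c ∈ S.image (fun I => Int.log 2 (avg I)), 4 * ((2 : ℝ) ^ c) ^ 2 *
          ∑ I ∈ S.filter (fun I => (2 : ℝ) ^ c ≤ avg I), b I ^ 2 * len I :=
        sum_mul_sq_le_sum_levels S (fun I => mul_nonneg (sq_nonneg _) (len_pos I).le) havg
    _ ≤ ∑ c ∈ S.image (fun I => Int.log 2 (avg I)), 4 * ((2 : ℝ) ^ c) ^ 2 *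
          (carl ^ 2 * (2 / 2 ^ c * ∫ x, largePart f (2 ^ c) x)) :=
        Finset.sum_le_sum fun c _ => by
          gcongr
          exact sum_sq_mul_len_le_of_le_setAverage hm hf (zpow_pos two_pos c) S _
    _ = 8 * carl ^ 2 * ∑ c ∈ S.image (fun I => Int.log 2 (avg I)),
          (2 : ℝ) ^ c * ∫ x, largePart f (2 ^ c) x := by
        rw [Finset.mul_sum]
        refine Finset.sum_congr rfl fun c _ => ?_
        field_simp
        ring
    _ ≤ 8 * carl ^ 2 * (4 * ∫ x, f x ^ 2) := by
        gcongr
        exact sum_zpow_mul_integral_largePart_le hm hf _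
    _ = 32 * carl ^ 2 * l2normSq f := by rw [l2normSq]; ring

/-- The discrete Carleson Embedding Theorem. -/
theorem statement1 :
    ∃ C : ℝ, 0 < C ∧ ∀ (b : D →₀ ℝ) (f : ℝ → ℝ), MemLp f 2 volume →
      ∑ I ∈ b.support, (b I) ^ 2 * (ip f (haar1 I)) ^ 2 ≤
        C * carlOn b.support (fun I => b I) ^ 2 * l2normSq f := by
  refine ⟨32, by norm_num, fun b f hf => ?_⟩
  obtain ⟨g, hg, hfg⟩ := hf.aestronglyMeasurable
  have hip : ∀ I, ip f (haar1 I) = ip g (haar1 I) := fun I =>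
    integral_congr_ae (hfg.mono fun x hx => by simp only [hx])
  have hnorm : l2normSq f = l2normSq g := integral_congr_ae (hfg.mono fun x hx => by simp only [hx])
  simp only [hip, hnorm]
  exact carleson_embedding_of_measurable b hg.measurable (hf.ae_eq hfg)

end RandomParaproducts
end
end

section
/- For finitely supported real sequences b = {b_I}, β = {β_J}, any fixed choice of signs σ ∈ {−1,+1}^𝒟, and any J ∈ 𝒟, one has ‖P^{0,0}_b (P^{σ,1,0}_β h_J)‖_2² = β_J² Σ_{I∈𝒟, J⊊I} b_I² · |J|/|I|; moreover, when the σ_J are independent uniform ±1 random variables, for every f ∈ L²(ℝ), E ‖P^{0,0}_b (P^{σ,1,0}_β f)‖_2² = Σ_{J∈𝒟} ⟨f, h_J⟩² β_J² Σ_{I∈𝒟, J⊊I} b_I² · |J|/|I|. -/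
open MeasureTheory ProbabilityTheory Real Filter
open scoped ENNReal

attribute [local instance] Classical.propDecidable

noncomputable section

namespace RandomParaproducts

/-!
The Haar functions are orthonormal, and `⟨h¹_J, h_I⟩` vanishes unless `J ⊊ I`, in which case
`h_I` is constant `± |I|^{-1/2}` on `J`, so that `⟨h¹_J, h_I⟩² = |J| / |I|`. Hence
`P^{σ,1,0}_β h_J = σ_J β_J h¹_J`, and Parseval's identity for the Haar system gives the first
formula. In general
`‖P^{0,0}_b (P^{σ,1,0}_β f)‖₂² = ∑_I (∑_J σ_J β_J ⟨f, h_J⟩ b_I ⟨h¹_J, h_I⟩)²`, and independent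
uniform signs are themselves an orthonormal system in `L²(μ)`, so Parseval's identity, now in
the variable `σ`, turns the expectation of each square into the sum of the squared coefficients.
-/

theorem integral_sq_sum_of_orthonormal {α ι : Type*} [MeasurableSpace α] {μ : Measure α}
    {e : ι → α → ℝ} (he : ∀ i, MemLp (e i) 2 μ) (hnorm : ∀ i, ∫ x, e i x * e i x ∂μ = 1)
    (horth : Pairwise fun i j => ∫ x, e i x * e j x ∂μ = 0) (s : Finset ι) (d : ι → ℝ) :
    ∫ x, (∑ i ∈ s, d i * e i x) ^ 2 ∂μ = ∑ i ∈ s, d i ^ 2 := by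
  have hint (i j : ι) : Integrable (fun x => e i x * e j x) μ := (he i).integrable_mul (he j)
  have hexpand (x : α) : (∑ i ∈ s, d i * e i x) ^ 2 =
      ∑ i ∈ s, ∑ j ∈ s, d i * d j * (e i x * e j x) := by
    rw [sq, Finset.sum_mul_sum]
    exact Finset.sum_congr rfl fun i _ => Finset.sum_congr rfl fun j _ => by ring
  simp_rw [hexpand]
  rw [integral_finsetSum _ fun i _ => integrable_finsetSum _ fun j _ => (hint i j).const_mul _]
  refine Finset.sum_congr rfl fun i hi => ?_
  rw [integral_finsetSum _ fun j _ => (hint i j).const_mul _, Finset.sum_eq_single i]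
  · rw [integral_const_mul, hnorm, mul_one, sq]
  · intro j _ hji
    rw [integral_const_mul, horth hji.symm, mul_zero]
  · exact fun h => absurd hi h

namespace IsSignMeasure

variable {μ : Measure (D → ℝ)}

lemma ae_eq_one_or_eq_neg_one (hμ : IsSignMeasure μ) (K : D) :
    ∀ᵐ σ ∂μ, σ K = 1 ∨ σ K = -1 := by
  have hp : MeasurableSet {y : ℝ | y = 1 ∨ y = -1} :=
    (measurableSet_singleton 1).union (measurableSet_singleton (-1))
  have hK : Measurable fun σ : D → ℝ => σ K := measurable_pi_apply K
  refine (ae_map_iff hK.aemeasurable hp).1 ?_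
  rw [hμ.2.2 K]
  refine Measure.ae_smul_measure (ae_add_measure_iff.2 ⟨?_, ?_⟩) _ <;> simp [ae_dirac_eq]

lemma memLp_eval (hμ : IsSignMeasure μ) (K : D) : MemLp (fun σ : D → ℝ => σ K) 2 μ := by
  have := hμ.1
  refine MemLp.of_bound (measurable_pi_apply K).aestronglyMeasurable 1 ?_
  filter_upwards [hμ.ae_eq_one_or_eq_neg_one K] with σ hσ
  rcases hσ with h | h <;> simp [h]

lemma integral_eval (hμ : IsSignMeasure μ) (K : D) : ∫ σ, σ K ∂μ = 0 := by
  rw [← integral_map (φ := fun σ : D → ℝ => σ K) (measurable_pi_apply K).aemeasurable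
    measurable_id'.aestronglyMeasurable, hμ.2.2 K,
    integral_smul_measure, integral_add_measure (integrable_dirac (by simp))
      (integrable_dirac (by simp)), integral_dirac, integral_dirac]
  norm_num

lemma integral_eval_mul_self (hμ : IsSignMeasure μ) (K : D) : ∫ σ, σ K * σ K ∂μ = 1 := by
  have := hμ.1
  rw [integral_congr_ae (g := fun _ => 1) ?_, integral_const, probReal_univ, smul_eq_mul, mul_one]
  filter_upwards [hμ.ae_eq_one_or_eq_neg_one K] with σ hσ
  rcases hσ with h | h <;> simp [h]

lemma integral_eval_mul_eval (hμ : IsSignMeasure μ) {K L : D} (h : K ≠ L) :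
    ∫ σ, σ K * σ L ∂μ = 0 :=
  calc ∫ σ, σ K * σ L ∂μ = (∫ σ, σ K ∂μ) * ∫ σ, σ L ∂μ :=
        (hμ.2.1.indepFun h).integral_mul_eq_mul_integral
          (measurable_pi_apply K).aestronglyMeasurable (measurable_pi_apply L).aestronglyMeasurable
    _ = 0 := by rw [hμ.integral_eval K, zero_mul]

end IsSignMeasure

lemma len_lc (I : D) : len (lc I) = len I / 2 := by
  rw [len, len, lc, zpow_sub_one₀ two_ne_zero, div_eq_mul_inv]

lemma len_rc (I : D) : len (rc I) = len I / 2 := by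
  rw [len, len, rc, zpow_sub_one₀ two_ne_zero, div_eq_mul_inv]

lemma mem_ival_iff {I : D} {x : ℝ} : x ∈ ival I ↔ ⌊x / 2 ^ I.1⌋ = I.2 := by
  have h := zpow_pos (two_pos (α := ℝ)) I.1
  rw [Int.floor_eq_iff, le_div_iff₀ h, div_lt_iff₀ h]
  rfl

lemma floor_div_two_zpow_add (x : ℝ) (m : ℤ) (t : ℕ) :
    ⌊x / 2 ^ (m + t)⌋ = ⌊x / 2 ^ m⌋ / 2 ^ t := by
  have h := Int.floor_div_natCast (x / 2 ^ m) (2 ^ t)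
  push_cast at h
  rw [zpow_add₀ two_ne_zero, zpow_natCast, ← div_div, h]

lemma ival_subset_or_disjoint {I K : D} (h : I.1 ≤ K.1) :
    ival I ⊆ ival K ∨ Disjoint (ival I) (ival K) := by
  obtain ⟨t, ht⟩ := Int.eq_ofNat_of_zero_le (sub_nonneg.2 h)
  have key : ∀ x ∈ ival I, x ∈ ival K ↔ I.2 / 2 ^ t = K.2 := by
    intro x hx
    rw [mem_ival_iff] at hx ⊢
    rw [show K.1 = I.1 + t by omega, floor_div_two_zpow_add, hx]
  by_cases hk : I.2 / 2 ^ t = K.2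
  · exact Or.inl fun x hx => (key x hx).2 hk
  · exact Or.inr (Set.disjoint_left.2 fun x hx => mt (key x hx).1 hk)

lemma ival_subset_or_supset_or_disjoint (I K : D) :
    ival I ⊆ ival K ∨ ival K ⊆ ival I ∨ Disjoint (ival I) (ival K) := by
  rcases le_total I.1 K.1 with h | h
  · rcases ival_subset_or_disjoint h with h' | h' <;> tauto
  · rcases ival_subset_or_disjoint h with h' | h'
    · tauto
    · exact Or.inr (Or.inr h'.symm)

lemma ival_lc_union_rc (I : D) : ival (lc I) ∪ ival (rc I) = ival I := by
  ext x
  have h := floor_div_two_zpow_add x (I.1 - 1) 1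
  push_cast at h
  rw [sub_add_cancel] at h
  simp only [Set.mem_union, mem_ival_iff, lc, rc, h]
  omega

lemma disjoint_ival_lc_rc (I : D) : Disjoint (ival (lc I)) (ival (rc I)) :=
  Set.disjoint_left.2 fun x => by simp only [mem_ival_iff, lc, rc]; omega

lemma ival_lc_subset (I : D) : ival (lc I) ⊆ ival I :=
  (ival_lc_union_rc I).subset.trans' Set.subset_union_left

lemma ival_rc_subset (I : D) : ival (rc I) ⊆ ival I :=
  (ival_lc_union_rc I).subset.trans' Set.subset_union_right

lemma ival_injective : Function.Injective ival := by
  intro I K h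
  have hscale : I.1 = K.1 := by
    have hvol := congrArg volume h
    rw [volume_ival, volume_ival,
      ENNReal.ofReal_eq_ofReal_iff (len_pos I).le (len_pos K).le, len, len] at hvol
    exact zpow_right_injective₀ two_pos (by norm_num) hvol
  obtain ⟨x, hx⟩ := ival_nonempty I
  have hxK : x ∈ ival K := h ▸ hx
  rw [mem_ival_iff] at hx hxK
  exact Prod.ext hscale (by rw [← hx, ← hxK, hscale])

lemma ival_subset_lc_or_rc_of_ssubset {J K : D} (h : ival J ⊂ ival K) :
    ival J ⊆ ival (lc K) ∨ ival J ⊆ ival (rc K) := by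
  obtain ⟨x, hx⟩ := ival_nonempty J
  have hscale : J.1 ≤ K.1 - 1 := by
    by_contra! hlt
    rcases ival_subset_or_disjoint (show K.1 ≤ J.1 by omega) with hKJ | hKJ
    · exact h.not_subset hKJ
    · exact Set.disjoint_left.1 hKJ (h.subset hx) hx
  rcases ival_subset_or_disjoint (K := lc K) hscale with hl | hl
  · exact Or.inl hl
  rcases ival_subset_or_disjoint (K := rc K) hscale with hr | hr
  · exact Or.inr hr
  rcases (ival_lc_union_rc K).symm.subset (h.subset hx) with hxc | hxc
  exacts [absurd hxc (Set.disjoint_left.1 hl hx), absurd hxc (Set.disjoint_left.1 hr hx)]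

def ind (I : D) : ℝ → ℝ := (ival I).indicator fun _ => 1

lemma memLp_ind (I : D) : MemLp (ind I) 2 volume :=
  memLp_indicator_const 2 (measurableSet_ival I) 1 (Or.inr (volume_ival_ne_top I))

lemma memLp_haar1 (I : D) : MemLp (haar1 I) 2 volume := (memLp_ind I).const_mul _

lemma ip_comm (f g : ℝ → ℝ) : ip f g = ip g f := by
  simp only [ip, mul_comm]

lemma ip_const_mul_left (c : ℝ) (u w : ℝ → ℝ) : ip (fun x => c * u x) w = c * ip u w := by
  simp only [ip, mul_assoc]
  exact integral_const_mul c _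

lemma ip_ind_ind (A B : D) : ip (ind A) (ind B) = volume.real (ival A ∩ ival B) := by
  simp only [ip, ind, ← Set.inter_indicator_mul, mul_one]
  rw [integral_indicator ((measurableSet_ival A).inter (measurableSet_ival B))]
  simp

lemma ip_ind_of_subset {A B : D} (h : ival A ⊆ ival B) : ip (ind A) (ind B) = len A := by
  rw [ip_ind_ind, Set.inter_eq_self_of_subset_left h, measureReal_def, volume_ival,
    ENNReal.toReal_ofReal (len_pos A).le]

lemma ip_ind_of_disjoint {A B : D} (h : Disjoint (ival A) (ival B)) : ip (ind A) (ind B) = 0 := by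
  rw [ip_ind_ind, h.inter_eq]
  simp

lemma ip_haar_left (I : D) {g : ℝ → ℝ} (hg : MemLp g 2 volume) :
    ip (haar I) g = (√(len I))⁻¹ * (ip (ind (rc I)) g - ip (ind (lc I)) g) := by
  have hsub : ip (fun x => ind (rc I) x - ind (lc I) x) g = ip (ind (rc I)) g - ip (ind (lc I)) g := by
    simp only [ip, sub_mul]
    exact integral_sub ((memLp_ind _).integrable_mul hg) ((memLp_ind _).integrable_mul hg)
  rw [← hsub]
  exact ip_const_mul_left _ _ _

lemma ip_haar_ind_of_subset_rc {K A : D} (h : ival A ⊆ ival (rc K)) :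
    ip (haar K) (ind A) = (√(len K))⁻¹ * len A := by
  rw [ip_haar_left K (memLp_ind A), ip_comm (ind (rc K)), ip_ind_of_subset h,
    ip_ind_of_disjoint ((disjoint_ival_lc_rc K).mono_right h), sub_zero]

lemma ip_haar_ind_of_subset_lc {K A : D} (h : ival A ⊆ ival (lc K)) :
    ip (haar K) (ind A) = -((√(len K))⁻¹ * len A) := by
  rw [ip_haar_left K (memLp_ind A), ip_comm (ind (lc K)), ip_ind_of_subset h,
    ip_ind_of_disjoint ((disjoint_ival_lc_rc K).symm.mono_right h), zero_sub, mul_neg]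

lemma ip_haar_ind_of_subset {K A : D} (h : ival K ⊆ ival A) : ip (haar K) (ind A) = 0 := by
  rw [ip_haar_left K (memLp_ind A), ip_ind_of_subset ((ival_rc_subset K).trans h),
    ip_ind_of_subset ((ival_lc_subset K).trans h), len_lc, len_rc, sub_self, mul_zero]

lemma ip_haar_ind_of_disjoint {K A : D} (h : Disjoint (ival K) (ival A)) :
    ip (haar K) (ind A) = 0 := by
  rw [ip_haar_left K (memLp_ind A), ip_ind_of_disjoint (h.mono_left (ival_rc_subset K)),
    ip_ind_of_disjoint (h.mono_left (ival_lc_subset K)), sub_self, mul_zero]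

/-- `h_K` is constant on every dyadic interval strictly contained in `K`. -/
lemma exists_ip_haar_ind_of_ssubset {I K : D} (h : ival I ⊂ ival K) :
    ∃ c : ℝ, c ^ 2 = (len K)⁻¹ ∧ ∀ A : D, ival A ⊆ ival I → ip (haar K) (ind A) = c * len A := by
  have hc : ((√(len K))⁻¹) ^ 2 = (len K)⁻¹ := by rw [inv_pow, sq_sqrt (len_pos K).le]
  rcases ival_subset_lc_or_rc_of_ssubset h with hl | hr
  · exact ⟨-(√(len K))⁻¹, by rw [neg_sq, hc], fun A hA => by
      rw [ip_haar_ind_of_subset_lc (hA.trans hl), neg_mul]⟩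
  · exact ⟨(√(len K))⁻¹, hc, fun A hA => ip_haar_ind_of_subset_rc (hA.trans hr)⟩

lemma ip_haar_self (I : D) : ip (haar I) (haar I) = 1 := by
  rw [ip_haar_left I (memℒp_haar I), ip_comm (ind _), ip_comm (ind _),
    ip_haar_ind_of_subset_rc subset_rfl, ip_haar_ind_of_subset_lc subset_rfl, len_lc, len_rc,
    sub_neg_eq_add, ← mul_add, add_halves, ← mul_assoc, ← mul_inv, mul_self_sqrt (len_pos I).le,
    inv_mul_cancel₀ (len_pos I).ne']

lemma ip_haar_haar_of_ssubset {I K : D} (h : ival I ⊂ ival K) : ip (haar I) (haar K) = 0 := by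
  obtain ⟨c, -, hc⟩ := exists_ip_haar_ind_of_ssubset h
  rw [ip_haar_left I (memℒp_haar K), ip_comm (ind _), ip_comm (ind _),
    hc _ (ival_rc_subset I), hc _ (ival_lc_subset I), len_lc, len_rc, sub_self, mul_zero]

lemma ip_haar_haar_of_disjoint {I K : D} (h : Disjoint (ival I) (ival K)) :
    ip (haar I) (haar K) = 0 := by
  rw [ip_haar_left I (memℒp_haar K), ip_comm (ind _), ip_comm (ind _),
    ip_haar_ind_of_disjoint (h.symm.mono_right (ival_rc_subset I)),
    ip_haar_ind_of_disjoint (h.symm.mono_right (ival_lc_subset I)), sub_self, mul_zero]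

lemma ip_haar_haar_of_ne {I K : D} (h : I ≠ K) : ip (haar I) (haar K) = 0 := by
  have hne : ival I ≠ ival K := ival_injective.ne h
  rcases ival_subset_or_supset_or_disjoint I K with hIK | hKI | hIK
  · exact ip_haar_haar_of_ssubset (hIK.ssubset_of_ne hne)
  · rw [ip_comm]
    exact ip_haar_haar_of_ssubset (hKI.ssubset_of_ne hne.symm)
  · exact ip_haar_haar_of_disjoint hIK

lemma ip_haar1_haar_sq (J K : D) :
    ip (haar1 J) (haar K) ^ 2 = if ival J ⊂ ival K then len J / len K else 0 := by
  rw [show ip (haar1 J) (haar K) = (√(len J))⁻¹ * ip (haar K) (ind J) from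
    (ip_const_mul_left _ (ind J) _).trans (by rw [ip_comm])]
  split_ifs with h
  · obtain ⟨c, hc2, hc⟩ := exists_ip_haar_ind_of_ssubset h
    rw [hc J subset_rfl, mul_pow, mul_pow, hc2, inv_pow, sq_sqrt (len_pos J).le]
    field_simp
  · have hzero : ip (haar K) (ind J) = 0 := by
      rcases ival_subset_or_supset_or_disjoint J K with hJK | hKJ | hJK
      · refine ip_haar_ind_of_subset (not_not.1 fun hKJ => h ?_)
        exact ssubset_iff_subset_not_superset.2 ⟨hJK, hKJ⟩
      · exact ip_haar_ind_of_subset hKJ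
      · exact ip_haar_ind_of_disjoint hJK.symm
    rw [hzero, mul_zero, sq, zero_mul]

lemma l2normSq_P (b : D →₀ ℝ) (g : ℝ → ℝ) :
    l2normSq (P false false b g) = ∑ I ∈ b.support, (b I * ip g (haar I)) ^ 2 :=
  integral_sq_sum_of_orthonormal memℒp_haar ip_haar_self (fun _ _ => ip_haar_haar_of_ne) _ _

lemma ip_Psig_haar (σ : D → ℝ) (β : D →₀ ℝ) (f : ℝ → ℝ) (I : D) :
    ip (Psig σ true false β f) (haar I) =
      ∑ K ∈ β.support, β K * ip f (haar K) * ip (haar1 K) (haar I) * σ K := by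
  have hterm (K : D) (x : ℝ) :
      σ K * (β K * ip f (haar K) * haar1 K x) * haar I x =
        σ K * (β K * ip f (haar K)) * (haar1 K x * haar I x) := by ring
  have hint (K : D) : Integrable (fun x => haar1 K x * haar I x) :=
    (memLp_haar1 K).integrable_mul (memℒp_haar I)
  change ∫ x, (∑ K ∈ β.support, σ K * (β K * ip f (haar K) * haar1 K x)) * haar I x = _
  simp only [Finset.sum_mul, hterm]
  rw [integral_finsetSum _ fun K _ => (hint K).const_mul _]
  refine Finset.sum_congr rfl fun K _ => ?_
  rw [integral_const_mul]
  unfold ip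
  ring

lemma l2normSq_P_Psig (σ : D → ℝ) (b β : D →₀ ℝ) (f : ℝ → ℝ) :
    l2normSq (P false false b (Psig σ true false β f)) =
      ∑ I ∈ b.support,
        (∑ K ∈ β.support, β K * ip f (haar K) * (b I * ip (haar1 K) (haar I)) * σ K) ^ 2 := by
  rw [l2normSq_P]
  refine Finset.sum_congr rfl fun I _ => ?_
  rw [ip_Psig_haar, Finset.mul_sum]
  exact congrArg (· ^ 2) (Finset.sum_congr rfl fun K _ => by ring)

lemma sum_sq_mul_ip_haar1_haar (b : D →₀ ℝ) (K : D) (c : ℝ) :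
    ∑ I ∈ b.support, (c * (b I * ip (haar1 K) (haar I))) ^ 2 =
      c ^ 2 * ∑ I ∈ b.support.filter (fun I => ival K ⊂ ival I), b I ^ 2 * (len K / len I) := by
  rw [Finset.sum_filter, Finset.mul_sum]
  refine Finset.sum_congr rfl fun I _ => ?_
  rw [mul_pow, mul_pow, ip_haar1_haar_sq]
  split_ifs <;> ring

lemma l2normSq_P_Psig_haar (b β : D →₀ ℝ) {σ : D → ℝ} {J : D} (hσ : σ J ^ 2 = 1) :
    l2normSq (P false false b (Psig σ true false β (haar J))) =
      β J ^ 2 * ∑ I ∈ b.support.filter (fun I => ival J ⊂ ival I), b I ^ 2 * (len J / len I) := by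
  have hcollapse (I : D) :
      ∑ K ∈ β.support, β K * ip (haar J) (haar K) * (b I * ip (haar1 K) (haar I)) * σ K =
        β J * (b I * ip (haar1 J) (haar I)) * σ J := by
    rw [Finset.sum_eq_single J (fun K _ hKJ => by rw [ip_haar_haar_of_ne hKJ.symm]; ring)
      (fun hJ => by rw [Finsupp.notMem_support_iff.1 hJ]; ring), ip_haar_self, mul_one]
  simp_rw [l2normSq_P_Psig, hcollapse, mul_pow _ (σ J), hσ, mul_one]
  exact sum_sq_mul_ip_haar1_haar b J (β J)

lemma integral_l2normSq_P_Psig {μ : Measure (D → ℝ)} (hμ : IsSignMeasure μ) (b β : D →₀ ℝ)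
    (f : ℝ → ℝ) :
    ∫ σ, l2normSq (P false false b (Psig σ true false β f)) ∂μ =
      ∑ J ∈ β.support, ip f (haar J) ^ 2 * β J ^ 2 *
        ∑ I ∈ b.support.filter (fun I => ival J ⊂ ival I), b I ^ 2 * (len J / len I) := by
  simp_rw [l2normSq_P_Psig]
  rw [integral_finsetSum _ fun I _ =>
    (memLp_finsetSum _ fun K _ => (hμ.memLp_eval K).const_mul _).integrable_sq]
  simp_rw [integral_sq_sum_of_orthonormal hμ.memLp_eval hμ.integral_eval_mul_self
    (fun _ _ => hμ.integral_eval_mul_eval)]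
  rw [Finset.sum_comm]
  refine Finset.sum_congr rfl fun J _ => ?_
  rw [sum_sq_mul_ip_haar1_haar, mul_pow, mul_comm (β J ^ 2)]

/-- `‖P^{0,0}_b (P^{σ,1,0}_β h_J)‖₂² = β_J² ∑_{I ⊋ J} b_I² |J|/|I|` for any
fixed signs, and `𝔼 ‖P^{0,0}_b (P^{σ,1,0}_β f)‖₂² = ∑_J ⟨f, h_J⟩² β_J² ∑_{I ⊋ J} b_I² |J|/|I|`
for independent uniform random signs. -/
theorem statement8 (b β : D →₀ ℝ) :
    (∀ σ : D → ℝ, (∀ I, σ I = 1 ∨ σ I = -1) → ∀ J : D,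
      l2normSq (P false false b (Psig σ true false β (haar J))) =
        (β J) ^ 2 * ∑ I ∈ b.support.filter (fun I => ival J ⊂ ival I),
          (b I) ^ 2 * (len J / len I)) ∧
    (∀ μ : Measure (D → ℝ), IsSignMeasure μ → ∀ f : ℝ → ℝ, MemLp f 2 volume →
      ∫ σ, l2normSq (P false false b (Psig σ true false β f)) ∂μ =
        ∑ J ∈ β.support, (ip f (haar J)) ^ 2 * (β J) ^ 2 *
          ∑ I ∈ b.support.filter (fun I => ival J ⊂ ival I),
            (b I) ^ 2 * (len J / len I)) := by
  refine ⟨fun σ hσ J => l2normSq_P_Psig_haar b β ?_,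
    fun μ hμ f _ => integral_l2normSq_P_Psig hμ b β f⟩
  rcases hσ J with h | h <;> simp [h]

end RandomParaproducts
end
end
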